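/- A probability distribution p on X^{k+1} (X a finite alphabet) is the (k+1)-th order marginal of some stationary process if and only if it satisfies the stationarity condition: Σ_{β ∈ X} p(β x^k) = Σ_{β ∈ X} p(x^k β) for all x^k ∈ X^k, i.e., the marginal of p on the first k coordinates equals the marginal on the last k coordinates. -/

import Mathlib

open MeasureTheory

/-!
Necessity: the cylinder of `x^k` in positions `1, …, k` is the preimage under the shift of the
cylinder of `x^k` in positions `0, …, k - 1`, and splitting either one according to the remaining
letter gives the two sums.

Sufficiency: run the `k`-th order Markov chain with transition kernel `q(b | s) = p(s b) / p(s)`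
started from `p`, using the random mapping representation: the next letter is `F_n(window)` for
i.i.d. random maps `F_n : X^k → X` with `P(F_n s = b) = q(b | s)`. On the space of pairs
(current window of length `k + 1`, remaining maps) the update `(x, F) ↦ (x_{1..k} F_0(x_{1..k}),
(F_{n+1})_n)` preserves `p ⊗ law(F)^ℕ` exactly because of the stationarity condition, and the
chain is the image of this measure-preserving system under its itinerary map, hence stationary.
-/

lemma Finset.prod_eq_ite_zero_mul_prod_preimage_succ {M : Type*} [CommMonoid M] (s : Finset ℕ)
    (f : ℕ → M) :
    ∏ i ∈ s, f i = (if 0 ∈ s then f 0 else 1) *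
      ∏ i ∈ s.preimage (· + 1) (add_left_injective 1).injOn, f (i + 1) := by
  classical
  have hrange : ∀ i, i ∈ Set.range (· + 1) ↔ ¬i = 0 := fun i => by
    simp [Nat.pos_iff_ne_zero]
  rw [Finset.prod_preimage' _ _ _ f, ← Finset.prod_filter_mul_prod_filter_not s (· = 0),
    Finset.prod_filter, Finset.prod_ite_eq', Finset.filter_congr fun i _ => hrange i]

theorem sum_measure_preimage_singleton_inter {α β : Type*} [MeasurableSpace α]
    [MeasurableSpace β] [Fintype β] [MeasurableSingletonClass β] (μ : Measure α) {f : α → β}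
    (hf : Measurable f) (A : Set α) : ∑ b, μ (f ⁻¹' {b} ∩ A) = μ A := by
  have := sum_measure_preimage_singleton (μ := μ.restrict A) Finset.univ
    fun b _ => hf (measurableSet_singleton b)
  simpa [Measure.restrict_apply (hf (measurableSet_singleton _))] using this

theorem measurableSet_setOf_forall_fin_eq {X : Type*} [MeasurableSpace X]
    [MeasurableSingletonClass X] {n : ℕ} (w : Fin n → X) :
    MeasurableSet {ω : ℕ → X | ∀ j : Fin n, ω j = w j} := by
  rw [Set.ofPred_forall]
  exact .iInter fun j => measurable_pi_apply _ (measurableSet_singleton _)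

section Itinerary

variable {Ω Y : Type*} [MeasurableSpace Ω] [MeasurableSpace Y]

def itinerary (T : Ω → Ω) (f : Ω → Y) (ω : Ω) (n : ℕ) : Y := f (T^[n] ω)

theorem measurable_itinerary {T : Ω → Ω} {f : Ω → Y} (hT : Measurable T) (hf : Measurable f) :
    Measurable (itinerary T f) :=
  measurable_pi_lambda _ fun n => hf.comp (hT.iterate n)

theorem MeasureTheory.MeasurePreserving.shift_map_itinerary {P : Measure Ω} {T : Ω → Ω}
    (hT : MeasurePreserving T P P) {f : Ω → Y} (hf : Measurable f) :
    MeasurePreserving (fun ω (i : ℕ) => ω (i + 1)) (P.map (itinerary T f))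
      (P.map (itinerary T f)) := by
  have hΦ := measurable_itinerary hT.measurable hf
  have hshift : Measurable fun ω : ℕ → Y => fun i => ω (i + 1) :=
    measurable_pi_lambda _ fun i => measurable_pi_apply (i + 1)
  have hcomm : (fun ω (i : ℕ) => ω (i + 1)) ∘ itinerary T f = itinerary T f ∘ T := by
    ext ω i
    simp [itinerary, Function.iterate_succ_apply]
  refine ⟨hshift, ?_⟩
  rw [Measure.map_map hshift hΦ, hcomm, ← Measure.map_map hΦ hT.measurable, hT.map_eq]

end Itinerary

section SeqCons

variable {Y : Type*} [MeasurableSpace Y]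

def seqCons (a : Y) (G : ℕ → Y) : ℕ → Y
  | 0 => a
  | n + 1 => G n

theorem measurable_seqCons : Measurable fun q : Y × (ℕ → Y) => seqCons q.1 q.2 := by
  refine measurable_pi_lambda _ fun n => ?_
  cases n with
  | zero => exact measurable_fst
  | succ n => exact (measurable_pi_apply n).comp measurable_snd

theorem measurePreserving_seqCons (ν : Measure Y) [IsProbabilityMeasure ν] :
    MeasurePreserving (fun q => seqCons q.1 q.2) (ν.prod (Measure.infinitePi fun _ : ℕ => ν))
      (Measure.infinitePi fun _ => ν) := by
  refine ⟨measurable_seqCons, Measure.eq_infinitePi _ fun s t ht => ?_⟩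
  have hpre : (fun q : Y × (ℕ → Y) => seqCons q.1 q.2) ⁻¹' (s : Set ℕ).pi t =
      {a | 0 ∈ s → a ∈ t 0} ×ˢ
        (s.preimage (· + 1) (add_left_injective 1).injOn : Set ℕ).pi (fun i => t (i + 1)) := by
    ext ⟨a, G⟩
    simp only [Set.mem_preimage, Set.mem_pi, Finset.mem_coe, Set.mem_prod, Set.mem_ofPred_eq,
      Finset.mem_preimage]
    refine ⟨fun h => ⟨h 0, fun i hi => h (i + 1) hi⟩, fun ⟨h0, hs⟩ i hi => ?_⟩
    cases i with
    | zero => exact h0 hi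
    | succ i => exact hs i hi
  rw [Measure.map_apply measurable_seqCons (.pi s.countable_toSet fun i _ => ht i), hpre,
    Measure.prod_prod, Measure.infinitePi_pi _ fun i _ => ht (i + 1),
    Finset.prod_eq_ite_zero_mul_prod_preimage_succ s (fun i => ν (t i))]
  split_ifs with h0 <;> simp [h0]

end SeqCons

theorem sum_measure_cons_eq_sum_measure_snoc {X : Type*} [Fintype X] [MeasurableSpace X]
    [MeasurableSingletonClass X] {μ : Measure (ℕ → X)}
    (hμ : MeasurePreserving (fun ω (i : ℕ) => ω (i + 1)) μ μ) {k : ℕ} (s : Fin k → X) :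
    ∑ β, μ {ω | ∀ j : Fin (k + 1), ω j = (Fin.cons β s : Fin (k + 1) → X) j} =
      ∑ β, μ {ω | ∀ j : Fin (k + 1), ω j = (Fin.snoc s β : Fin (k + 1) → X) j} := by
  have hcons : ∀ β, {ω : ℕ → X | ∀ j : Fin (k + 1), ω j = (Fin.cons β s : Fin (k + 1) → X) j} =
      (fun ω => ω 0) ⁻¹' {β} ∩ (fun ω (i : ℕ) => ω (i + 1)) ⁻¹' {ω | ∀ j : Fin k, ω j = s j} := by
    intro β; ext ω; simp [Fin.forall_fin_succ]
  have hsnoc : ∀ β, {ω : ℕ → X | ∀ j : Fin (k + 1), ω j = (Fin.snoc s β : Fin (k + 1) → X) j} =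
      (fun ω => ω k) ⁻¹' {β} ∩ {ω | ∀ j : Fin k, ω j = s j} := by
    intro β; ext ω; simp [Fin.forall_fin_succ', and_comm]
  simp_rw [hcons, hsnoc, sum_measure_preimage_singleton_inter μ (measurable_pi_apply _)]
  exact hμ.measure_preimage (measurableSet_setOf_forall_fin_eq s).nullMeasurableSet

namespace MarkovChain

variable {X : Type*} {k : ℕ}

def step (x : Fin (k + 1) → X) (f : (Fin k → X) → X) : Fin (k + 1) → X :=
  Fin.snoc (Fin.tail x) (f (Fin.tail x))

def advance (ω : (Fin (k + 1) → X) × (ℕ → (Fin k → X) → X)) :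
    (Fin (k + 1) → X) × (ℕ → (Fin k → X) → X) :=
  (step ω.1 (ω.2 0), fun n => ω.2 (n + 1))

theorem advance_iterate_fst_zero (ω : (Fin (k + 1) → X) × (ℕ → (Fin k → X) → X)) {n : ℕ}
    (hn : n < k + 1) : (advance^[n] ω).1 0 = ω.1 ⟨n, hn⟩ := by
  induction n generalizing ω with
  | zero => rfl
  | succ n ih =>
    rw [Function.iterate_succ_apply, ih _ (by omega)]
    exact Fin.snoc_castSucc (α := fun _ => X) (i := (⟨n, by omega⟩ : Fin k)) ..

variable [Fintype X]

def HasEqualMarginals (π : PMF (Fin (k + 1) → X)) : Prop :=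
  ∀ s : Fin k → X, ∑ β, π (Fin.cons β s) = ∑ β, π (Fin.snoc s β)

/-- The conditional law of the last letter given the first `k` letters `s`; when `s` has mass
zero any law would do, and the law of the last letter is used. -/
noncomputable def condLast (π : PMF (Fin (k + 1) → X)) (s : Fin k → X) : PMF X :=
  if h : ∑ b, π (Fin.snoc s b) = 0 then π.map (· (Fin.last k))
  else PMF.normalize (fun b => π (Fin.snoc s b)) (by rwa [tsum_fintype])
    (by rw [tsum_fintype]; exact ENNReal.sum_ne_top.2 fun b _ => PMF.apply_ne_top π _)

theorem sum_cons_mul_condLast {π : PMF (Fin (k + 1) → X)}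
    (hπ : HasEqualMarginals π)
    (s : Fin k → X) (b : X) :
    (∑ β, π (Fin.cons β s)) * condLast π s b = π (Fin.snoc s b) := by
  rw [hπ, condLast]
  split_ifs with h
  · rw [h, Finset.sum_eq_zero_iff.1 h b (Finset.mem_univ b), zero_mul]
  · rw [PMF.normalize_apply, tsum_fintype, mul_left_comm, ENNReal.mul_inv_cancel h
      (ENNReal.sum_ne_top.2 fun b _ => PMF.apply_ne_top π _), mul_one]

variable [MeasurableSpace X] [MeasurableSingletonClass X]

noncomputable def randomMapLaw (π : PMF (Fin (k + 1) → X)) : Measure ((Fin k → X) → X) :=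
  Measure.pi fun s => (condLast π s).toMeasure

instance (π : PMF (Fin (k + 1) → X)) : IsProbabilityMeasure (randomMapLaw π) := by
  unfold randomMapLaw; infer_instance

theorem measurePreserving_step {π : PMF (Fin (k + 1) → X)}
    (hπ : HasEqualMarginals π) :
    MeasurePreserving (fun q => step q.1 q.2) (π.toMeasure.prod (randomMapLaw π)) π.toMeasure := by
  refine ⟨measurable_of_countable _, Measure.ext_iff_singleton.2 fun w => ?_⟩
  have hpre : (fun q : (Fin (k + 1) → X) × ((Fin k → X) → X) => step q.1 q.2) ⁻¹' {w} =
      ((Fin.tail : (Fin (k + 1) → X) → Fin k → X) ⁻¹' {Fin.init w}) ×ˢ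
        ((Function.eval (Fin.init w) : ((Fin k → X) → X) → X) ⁻¹' {w (Fin.last k)}) := by
    ext ⟨x, f⟩
    conv_lhs => rw [Set.mem_preimage, Set.mem_singleton_iff, ← Fin.snoc_init_self w, step,
      Fin.snoc_inj]
    simp only [Set.mem_prod, Set.mem_preimage, Set.mem_singleton_iff, Function.eval]
    exact and_congr_right fun h => by rw [h]
  have hfiber : ∀ β, (fun x : Fin (k + 1) → X => x 0) ⁻¹' {β} ∩ Fin.tail ⁻¹' {Fin.init w} =
      {Fin.cons β (Fin.init w)} := by
    intro β
    ext x
    simp only [Set.mem_inter_iff, Set.mem_preimage, Set.mem_singleton_iff]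
    rw [← Fin.cons_self_tail x, Fin.cons_inj, Fin.cons_self_tail]
  rw [Measure.map_apply (measurable_of_countable _) (measurableSet_singleton w), hpre,
    Measure.prod_prod, randomMapLaw, (measurePreserving_eval _ _).measure_preimage
      (measurableSet_singleton _).nullMeasurableSet,
    ← sum_measure_preimage_singleton_inter π.toMeasure (measurable_pi_apply 0)]
  simp_rw [hfiber, PMF.toMeasure_apply_singleton _ _ (measurableSet_singleton _)]
  rw [sum_cons_mul_condLast hπ, Fin.snoc_init_self]

theorem measurable_advance : Measurable (advance (X := X) (k := k)) :=
  ((measurable_of_countable fun q : (Fin (k + 1) → X) × ((Fin k → X) → X) => step q.1 q.2).comp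
    (measurable_fst.prodMk ((measurable_pi_apply 0).comp measurable_snd))).prodMk
    (measurable_pi_lambda _ fun n => (measurable_pi_apply (n + 1)).comp measurable_snd)

noncomputable def drivingLaw (π : PMF (Fin (k + 1) → X)) :
    Measure ((Fin (k + 1) → X) × (ℕ → (Fin k → X) → X)) :=
  π.toMeasure.prod (Measure.infinitePi fun _ => randomMapLaw π)

theorem measurePreserving_advance {π : PMF (Fin (k + 1) → X)}
    (hπ : HasEqualMarginals π) :
    MeasurePreserving advance (drivingLaw π) (drivingLaw π) := by
  have hcons := (MeasurePreserving.id π.toMeasure).prod (measurePreserving_seqCons (randomMapLaw π))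
  have hstep := ((measurePreserving_step hπ).prod
    (MeasurePreserving.id (Measure.infinitePi fun _ : ℕ => randomMapLaw π))).comp
    (measurePreserving_prodAssoc π.toMeasure (randomMapLaw π)
      (Measure.infinitePi fun _ : ℕ => randomMapLaw π)).symm
  refine ⟨measurable_advance, ?_⟩
  -- `advance (x, seqCons a G) = (step x a, G)`: `advance` factors through `hcons` and `hstep`.
  unfold drivingLaw
  conv_lhs => rw [← hcons.map_eq, Measure.map_map measurable_advance hcons.measurable]
  exact hstep.map_eq

theorem measurable_itinerary_advance :
    Measurable (itinerary (advance (X := X) (k := k)) fun ω => ω.1 0) :=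
  measurable_itinerary measurable_advance ((measurable_pi_apply 0).comp measurable_fst)

noncomputable def chain (π : PMF (Fin (k + 1) → X)) : Measure (ℕ → X) :=
  (drivingLaw π).map (itinerary advance fun ω => ω.1 0)

instance (π : PMF (Fin (k + 1) → X)) : IsProbabilityMeasure (chain π) := by
  unfold chain drivingLaw
  exact Measure.isProbabilityMeasure_map measurable_itinerary_advance.aemeasurable

theorem measurePreserving_shift_chain {π : PMF (Fin (k + 1) → X)}
    (hπ : HasEqualMarginals π) :
    MeasurePreserving (fun ω (i : ℕ) => ω (i + 1)) (chain π) (chain π) :=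
  (measurePreserving_advance hπ).shift_map_itinerary ((measurable_pi_apply 0).comp measurable_fst)

theorem chain_setOf_forall_fin_eq (π : PMF (Fin (k + 1) → X)) (w : Fin (k + 1) → X) :
    chain π {ω | ∀ j : Fin (k + 1), ω j = w j} = π w := by
  have hpre : itinerary advance (fun ω => ω.1 0) ⁻¹' {ω : ℕ → X | ∀ j : Fin (k + 1), ω j = w j} =
      Prod.fst ⁻¹' {w} := by
    ext ω
    simp only [Set.mem_preimage, Set.mem_ofPred_eq, itinerary, Set.mem_singleton_iff, funext_iff]
    exact forall_congr' fun j => by rw [advance_iterate_fst_zero _ j.2]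
  rw [chain, Measure.map_apply measurable_itinerary_advance (measurableSet_setOf_forall_fin_eq w),
    hpre, drivingLaw, measurePreserving_fst.measure_preimage
      (measurableSet_singleton w).nullMeasurableSet,
    PMF.toMeasure_apply_singleton _ _ (measurableSet_singleton w)]

end MarkovChain

/-- A pmf `p` on `X^{k+1}` is the `(k+1)`-th order marginal of a stationary process
(a shift-invariant probability measure on `X^ℕ`) if and only if it satisfies the
stationarity condition `∑_β p(β x^k) = ∑_β p(x^k β)` for all `x^k`. -/
theorem stationary_marginal_iff_stationarity_condition
    {X : Type*} [Fintype X] [MeasurableSpace X] [MeasurableSingletonClass X]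
    (k : ℕ) (p : (Fin (k + 1) → X) → ℝ)
    (hp0 : ∀ w, 0 ≤ p w) (hp1 : ∑ w, p w = 1) :
    (∃ μ : Measure (ℕ → X), IsProbabilityMeasure μ ∧
        MeasurePreserving (fun ω (i : ℕ) => ω (i + 1)) μ μ ∧
        ∀ w : Fin (k + 1) → X,
          p w = (μ {ω | ∀ j : Fin (k + 1), ω (j : ℕ) = w j}).toReal) ↔
    (∀ xk : Fin k → X, ∑ β : X, p (Fin.cons β xk) = ∑ β : X, p (Fin.snoc xk β)) := by
  constructor
  · rintro ⟨μ, hμ, hshift, hp⟩ s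
    simp only [hp]
    rw [← ENNReal.toReal_sum fun _ _ => measure_ne_top μ _,
      ← ENNReal.toReal_sum fun _ _ => measure_ne_top μ _,
      sum_measure_cons_eq_sum_measure_snoc hshift s]
  · intro hst
    have hsum : ∑ w, ENNReal.ofReal (p w) = 1 := by
      rw [← ENNReal.ofReal_sum_of_nonneg fun w _ => hp0 w, hp1, ENNReal.ofReal_one]
    let π := PMF.ofFintype _ hsum
    have hπ : MarkovChain.HasEqualMarginals π := fun s => by
      simp only [π, PMF.ofFintype_apply]
      rw [← ENNReal.ofReal_sum_of_nonneg fun β _ => hp0 _, hst,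
        ENNReal.ofReal_sum_of_nonneg fun β _ => hp0 _]
    refine ⟨MarkovChain.chain π, inferInstance, MarkovChain.measurePreserving_shift_chain hπ,
      fun w => ?_⟩
    rw [MarkovChain.chain_setOf_forall_fin_eq, PMF.ofFintype_apply, ENNReal.toReal_ofReal (hp0 w)]
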